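/- Let λ > 0, ε ∈ {−1, +1}, and x₀ ∈ ℝ. For t > 0 let P^{(−λ)}(x,t|x₀,0) = (2π σ₋²(t))^{−1/2} exp(−(x − x₀ e^{−λt})² / (2σ₋²(t))) with σ₋²(t) = (1 − e^{−2λt})/(2λ), and define Q_ε(x,t) = [h_ε(x,t)/h_ε(x₀,0)] · P^{(−λ)}(x,t|x₀,0), where h_ε(x,t) = e^{−λt} e^{λx²} (√λ/√π) ∫_{−∞}^{εx} e^{−λs²} ds. Then Q_ε satisfies the Kolmogorov forward equation ∂_t Q_ε(x,t) = −∂_x [ b_ε(x) Q_ε(x,t) ] + (1/2) ∂_{xx} Q_ε(x,t) for all x ∈ ℝ, t > 0, where b_ε(x) = λx + ε e^{−λx²} / ∫_{−∞}^{εx} e^{−λs²} ds. -/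

import Mathlib

open MeasureTheory intervalIntegral

/-- Variance of the stationary Ornstein–Uhlenbeck process: `σ₋²(t) = (1-e^{-2λt})/(2λ)`. -/
noncomputable def sigmaMinusSq (lam t : ℝ) : ℝ := (1 - Real.exp (-2 * lam * t)) / (2 * lam)

/-- Gaussian transition density of the stationary Ornstein–Uhlenbeck process
`dX = -λX dt + dW`: mean `x₀e^{-λt}`, variance `σ₋²(t)`. -/
noncomputable def POU (lam x₀ x t : ℝ) : ℝ :=
  (Real.sqrt (2 * Real.pi * sigmaMinusSq lam t))⁻¹ *
    Real.exp (-(x - x₀ * Real.exp (-lam * t)) ^ 2 / (2 * sigmaMinusSq lam t))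

/-- The space–time harmonic function of Theorem 4:
`h_ε(x,t) = e^{-λt} e^{λx²} (√λ/√π) ∫_{-∞}^{εx} e^{-λs²} ds`. -/
noncomputable def hOU (lam ε x t : ℝ) : ℝ :=
  Real.exp (-lam * t) * Real.exp (lam * x ^ 2) * (Real.sqrt lam / Real.sqrt Real.pi) *
    ∫ s in Set.Iic (ε * x), Real.exp (-lam * s ^ 2)

/-- The h-transformed transition density `Q_ε = (h_ε(x,t)/h_ε(x₀,0)) P^{(-λ)}(x,t|x₀,0)`. -/
noncomputable def QOU (lam ε x₀ t x : ℝ) : ℝ :=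
  (hOU lam ε x t / hOU lam ε x₀ 0) * POU lam x₀ x t

/-- The drift of the h-transformed diffusion:
`b_ε(x) = λx + ε e^{-λx²} / ∫_{-∞}^{εx} e^{-λs²} ds`. -/
noncomputable def bOU (lam ε x : ℝ) : ℝ :=
  lam * x + ε * Real.exp (-lam * x ^ 2) / ∫ s in Set.Iic (ε * x), Real.exp (-lam * s ^ 2)


noncomputable def IgF (lam ε y : ℝ) : ℝ := ∫ s in Set.Iic (ε * y), Real.exp (-lam * s ^ 2)

private lemma hd_congr {f : ℝ → ℝ} {d d' y : ℝ} (h : HasDerivAt f d y) (hd : d' = d) :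
    HasDerivAt f d' y := by rw [hd]; exact h

lemma IgF_pos (lam : ℝ) (hlam : 0 < lam) (ε y : ℝ) : 0 < IgF lam ε y := by
  have hint : Integrable (fun s : ℝ => Real.exp (-lam * s ^ 2)) := integrable_exp_neg_mul_sq hlam
  unfold IgF
  rw [setIntegral_pos_iff_support_of_nonneg_ae]
  · have hs : (Function.support fun s : ℝ => Real.exp (-lam * s ^ 2)) = Set.univ := by
      ext s; simp [Function.mem_support, Real.exp_ne_zero]
    rw [hs, Set.univ_inter, Real.volume_Iic]
    simp
  · filter_upwards with s using (Real.exp_pos _).le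
  · exact hint.integrableOn

lemma IgF_hasDerivAt (lam : ℝ) (hlam : 0 < lam) (ε : ℝ) (hε : ε = 1 ∨ ε = -1) (y : ℝ) :
    HasDerivAt (IgF lam ε) (ε * (Real.exp (lam * y ^ 2))⁻¹) y := by
  have hcont : Continuous fun s : ℝ => Real.exp (-lam * s ^ 2) := by fun_prop
  have hint : Integrable (fun s : ℝ => Real.exp (-lam * s ^ 2)) := integrable_exp_neg_mul_sq hlam
  have h1 : HasDerivAt (fun u : ℝ => ∫ s in (0:ℝ)..u, Real.exp (-lam * s ^ 2))
      (Real.exp (-lam * (ε * y) ^ 2)) (ε * y) :=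
    integral_hasDerivAt_right hint.intervalIntegrable
      (hcont.stronglyMeasurableAtFilter _ _) hcont.continuousAt
  have h2 : HasDerivAt (fun u : ℝ => ∫ s in Set.Iic u, Real.exp (-lam * s ^ 2))
      (Real.exp (-lam * (ε * y) ^ 2)) (ε * y) := by
    have heq : (fun u : ℝ => ∫ s in Set.Iic u, Real.exp (-lam * s ^ 2))
        = fun u => (∫ s in Set.Iic (0:ℝ), Real.exp (-lam * s ^ 2))
            + ∫ s in (0:ℝ)..u, Real.exp (-lam * s ^ 2) := by
      funext u
      rw [← integral_Iic_sub_Iic hint.integrableOn hint.integrableOn]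
      ring
    rw [heq]
    exact h1.const_add _
  have h3 : HasDerivAt (fun z : ℝ => ε * z) ε y := by
    simpa using (hasDerivAt_id y).const_mul ε
  have h4 := h2.comp y h3
  refine hd_congr (f := IgF lam ε) h4 ?_
  rw [← Real.exp_neg]
  rcases hε with rfl | rfl <;> · rw [mul_comm]; congr 2; ring



lemma sigma_pos (lam t : ℝ) (hlam : 0 < lam) (ht : 0 < t) : 0 < sigmaMinusSq lam t := by
  unfold sigmaMinusSq
  have h1 : Real.exp (-2 * lam * t) < 1 := by
    rw [Real.exp_lt_one_iff]
    nlinarith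
  have h2 : 0 < 2 * lam := by linarith
  exact div_pos (by linarith) h2

lemma sigma_hasDerivAt (lam t : ℝ) (hlam : 0 < lam) :
    HasDerivAt (sigmaMinusSq lam) (1 - 2 * lam * sigmaMinusSq lam t) t := by
  have h1 : HasDerivAt (fun τ : ℝ => -2 * lam * τ) (-2 * lam) t := by
    simpa using (hasDerivAt_id t).const_mul (-2 * lam)
  have h2 := ((h1.exp.const_sub 1).div_const (2 * lam))
  show HasDerivAt (fun τ : ℝ => (1 - Real.exp (-2 * lam * τ)) / (2 * lam)) _ t
  refine hd_congr h2 ?_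
  unfold sigmaMinusSq
  field_simp
  ring

noncomputable def FF (lam ε m v y : ℝ) : ℝ :=
  Real.exp (lam * y ^ 2) * IgF lam ε y * Real.exp (-(y - m) ^ 2 / (2 * v))

noncomputable def FF' (lam ε m v y : ℝ) : ℝ :=
  ((2 * lam * y - (y - m) / v) * Real.exp (lam * y ^ 2) * IgF lam ε y + ε) *
    Real.exp (-(y - m) ^ 2 / (2 * v))

noncomputable def FF'' (lam ε m v y : ℝ) : ℝ :=
  ((2 * lam - 1 / v) * Real.exp (lam * y ^ 2) * IgF lam ε y
      + (2 * lam * y - (y - m) / v) * (2 * lam * y * Real.exp (lam * y ^ 2) * IgF lam ε y + ε)) *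
    Real.exp (-(y - m) ^ 2 / (2 * v))
  + ((2 * lam * y - (y - m) / v) * Real.exp (lam * y ^ 2) * IgF lam ε y + ε) *
      Real.exp (-(y - m) ^ 2 / (2 * v)) * (-(y - m) / v)

lemma exp_sq_hasDerivAt (lam y : ℝ) :
    HasDerivAt (fun z : ℝ => Real.exp (lam * z ^ 2))
      (Real.exp (lam * y ^ 2) * (2 * lam * y)) y := by
  have h1 : HasDerivAt (fun z : ℝ => lam * z ^ 2) (2 * lam * y) y := by
    refine hd_congr ((hasDerivAt_pow 2 y).const_mul lam) ?_
    norm_num; ring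
  exact h1.exp

lemma q_hasDerivAt (m v y : ℝ) (hv : v ≠ 0) :
    HasDerivAt (fun z : ℝ => Real.exp (-(z - m) ^ 2 / (2 * v)))
      (Real.exp (-(y - m) ^ 2 / (2 * v)) * (-(y - m) / v)) y := by
  have h0 : HasDerivAt (fun z : ℝ => z - m) 1 y := (hasDerivAt_id y).sub_const m
  have h1 : HasDerivAt (fun z : ℝ => -(z - m) ^ 2 / (2 * v)) (-(y - m) / v) y := by
    refine hd_congr (((h0.pow 2).neg).div_const (2 * v)) ?_
    field_simp
    ring
  exact h1.exp

lemma FF_hasDerivAt (lam : ℝ) (hlam : 0 < lam) (ε : ℝ) (hε : ε = 1 ∨ ε = -1) (m v : ℝ)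
    (hv : v ≠ 0) (y : ℝ) :
    HasDerivAt (FF lam ε m v) (FF' lam ε m v y) y := by
  have h := ((exp_sq_hasDerivAt lam y).mul (IgF_hasDerivAt lam hlam ε hε y)).mul
    (q_hasDerivAt m v y hv)
  show HasDerivAt (fun y => Real.exp (lam * y ^ 2) * IgF lam ε y *
      Real.exp (-(y - m) ^ 2 / (2 * v))) (FF' lam ε m v y) y
  refine hd_congr h ?_
  unfold FF'
  simp only [Pi.mul_apply]
  field_simp [Real.exp_ne_zero]
  ring

lemma FF'_hasDerivAt (lam : ℝ) (hlam : 0 < lam) (ε : ℝ) (hε : ε = 1 ∨ ε = -1) (m v : ℝ)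
    (hv : v ≠ 0) (y : ℝ) :
    HasDerivAt (FF' lam ε m v) (FF'' lam ε m v y) y := by
  have hlin : HasDerivAt (fun z : ℝ => 2 * lam * z - (z - m) / v) (2 * lam - 1 / v) y := by
    have ha : HasDerivAt (fun z : ℝ => 2 * lam * z) (2 * lam) y := by
      simpa using (hasDerivAt_id y).const_mul (2 * lam)
    have hb : HasDerivAt (fun z : ℝ => (z - m) / v) (1 / v) y := by
      refine hd_congr (((hasDerivAt_id y).sub_const m).div_const v) ?_
      ring
    exact ha.sub hb
  have hA := ((hlin.mul (exp_sq_hasDerivAt lam y)).mul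
      (IgF_hasDerivAt lam hlam ε hε y)).add_const ε
  have h := hA.mul (q_hasDerivAt m v y hv)
  show HasDerivAt (fun y => ((2 * lam * y - (y - m) / v) * Real.exp (lam * y ^ 2) *
      IgF lam ε y + ε) * Real.exp (-(y - m) ^ 2 / (2 * v))) (FF'' lam ε m v y) y
  refine hd_congr h ?_
  unfold FF''
  simp only [Pi.mul_apply]
  field_simp [Real.exp_ne_zero]
  ring

lemma b_hasDerivAt (lam : ℝ) (hlam : 0 < lam) (ε : ℝ) (hε : ε = 1 ∨ ε = -1) (x : ℝ) :
    HasDerivAt (fun z : ℝ => lam * z + ε * Real.exp (-lam * z ^ 2) / IgF lam ε z)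
      (lam + ((-2 * lam * x) * ε * (Real.exp (lam * x ^ 2))⁻¹ * IgF lam ε x
          - ((Real.exp (lam * x ^ 2))⁻¹) ^ 2) / (IgF lam ε x) ^ 2) x := by
  have h1 : HasDerivAt (fun z : ℝ => lam * z) lam x := by
    simpa using (hasDerivAt_id x).const_mul lam
  have hnum : HasDerivAt (fun z : ℝ => ε * Real.exp (-lam * z ^ 2))
      (ε * (Real.exp (-lam * x ^ 2) * (-2 * lam * x))) x := by
    have hi : HasDerivAt (fun z : ℝ => -lam * z ^ 2) (-2 * lam * x) x := by
      refine hd_congr ((hasDerivAt_pow 2 x).const_mul (-lam)) ?_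
      norm_num; ring
    exact (hi.exp).const_mul ε
  have hdiv := hnum.div (IgF_hasDerivAt lam hlam ε hε x) (IgF_pos lam hlam ε x).ne'
  refine hd_congr (h1.add hdiv) ?_
  have hen : Real.exp (-lam * x ^ 2) = (Real.exp (lam * x ^ 2))⁻¹ := by
    rw [← Real.exp_neg]; congr 1; ring
  rw [hen]
  rcases hε with rfl | rfl <;>
    · field_simp [Real.exp_ne_zero, (IgF_pos lam hlam _ x).ne']

set_option maxHeartbeats 1600000 in
/-- Theorem 4 (transition-density claim): `Q_ε` solves the Kolmogorov forward equation
`∂_t Q_ε = -∂_x [b_ε Q_ε] + (1/2) ∂_{xx} Q_ε` for all `x ∈ ℝ`, `t > 0`. -/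
theorem stmt_15 (lam : ℝ) (hlam : 0 < lam) (ε : ℝ) (hε : ε = 1 ∨ ε = -1) (x₀ : ℝ) :
    ∀ (x : ℝ), ∀ t > (0 : ℝ),
      deriv (fun τ => QOU lam ε x₀ τ x) t
        = - deriv (fun y => bOU lam ε y * QOU lam ε x₀ t y) x
          + (1 / 2) * deriv (deriv (fun y => QOU lam ε x₀ t y)) x := by
  intro x t ht
  have hv0 : 0 < sigmaMinusSq lam t := sigma_pos lam t hlam ht
  have hπ : 0 < 2 * Real.pi * sigmaMinusSq lam t :=
    mul_pos (by positivity) hv0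
  have hS : 0 < Real.sqrt (2 * Real.pi * sigmaMinusSq lam t) := Real.sqrt_pos.mpr hπ
  have hIx : 0 < IgF lam ε x := IgF_pos lam hlam ε x
  -- time-derivative pieces
  have hE : HasDerivAt (fun τ : ℝ => Real.exp (-lam * τ)) (Real.exp (-lam * t) * -lam) t := by
    have h : HasDerivAt (fun τ : ℝ => -lam * τ) (-lam) t := by
      simpa using (hasDerivAt_id t).const_mul (-lam)
    exact h.exp
  have hσ := sigma_hasDerivAt lam t hlam
  have hw : HasDerivAt (fun τ => 2 * Real.pi * sigmaMinusSq lam τ)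
      (2 * Real.pi * (1 - 2 * lam * sigmaMinusSq lam t)) t := hσ.const_mul (2 * Real.pi)
  have hsqrt : HasDerivAt (fun τ => Real.sqrt (2 * Real.pi * sigmaMinusSq lam τ))
      (1 / (2 * Real.sqrt (2 * Real.pi * sigmaMinusSq lam t)) *
        (2 * Real.pi * (1 - 2 * lam * sigmaMinusSq lam t))) t := by
    refine hd_congr (hw.sqrt hπ.ne') ?_
    ring
  have hinv : HasDerivAt (fun τ => (Real.sqrt (2 * Real.pi * sigmaMinusSq lam τ))⁻¹)
      (-((1 - 2 * lam * sigmaMinusSq lam t) / (2 * sigmaMinusSq lam t)) *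
        (Real.sqrt (2 * Real.pi * sigmaMinusSq lam t))⁻¹) t := by
    refine hd_congr (hsqrt.inv hS.ne') ?_
    rw [Real.sq_sqrt hπ.le]
    field_simp
  have hm : HasDerivAt (fun τ => x₀ * Real.exp (-lam * τ)) (x₀ * (Real.exp (-lam * t) * -lam)) t :=
    hE.const_mul x₀
  have hsub : HasDerivAt (fun τ => x - x₀ * Real.exp (-lam * τ))
      (-(x₀ * (Real.exp (-lam * t) * -lam))) t := hm.const_sub x
  have hden : HasDerivAt (fun τ => 2 * sigmaMinusSq lam τ)
      (2 * (1 - 2 * lam * sigmaMinusSq lam t)) t := hσ.const_mul 2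
  have hq := ((((hsub.pow 2).neg).div hden (by linarith : (0:ℝ) < 2 * sigmaMinusSq lam t).ne')).exp
  have hT : HasDerivAt (fun τ => Real.exp (-lam * τ) * (Real.sqrt (2 * Real.pi * sigmaMinusSq lam τ))⁻¹ *
      Real.exp (-(x - x₀ * Real.exp (-lam * τ)) ^ 2 / (2 * sigmaMinusSq lam τ))) _ t :=
    (hE.mul hinv).mul hq
  -- rewrite the three functions
  have hfun_t : (fun τ => QOU lam ε x₀ τ x) = fun τ =>
      ((hOU lam ε x₀ 0)⁻¹ * (Real.sqrt lam / Real.sqrt Real.pi) * Real.exp (lam * x ^ 2) *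
        IgF lam ε x) *
      (Real.exp (-lam * τ) * (Real.sqrt (2 * Real.pi * sigmaMinusSq lam τ))⁻¹ *
        Real.exp (-(x - x₀ * Real.exp (-lam * τ)) ^ 2 / (2 * sigmaMinusSq lam τ))) := by
    funext τ
    simp only [QOU, POU, hOU, IgF]
    ring
  have hfun_x : (fun y => QOU lam ε x₀ t y) = fun y =>
      ((hOU lam ε x₀ 0)⁻¹ * (Real.sqrt lam / Real.sqrt Real.pi) * Real.exp (-lam * t) *
        (Real.sqrt (2 * Real.pi * sigmaMinusSq lam t))⁻¹) *
      FF lam ε (x₀ * Real.exp (-lam * t)) (sigmaMinusSq lam t) y := by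
    funext y
    simp only [QOU, POU, hOU, FF, IgF]
    ring
  have hfun_b : (fun y => bOU lam ε y * QOU lam ε x₀ t y) = fun y =>
      ((hOU lam ε x₀ 0)⁻¹ * (Real.sqrt lam / Real.sqrt Real.pi) * Real.exp (-lam * t) *
        (Real.sqrt (2 * Real.pi * sigmaMinusSq lam t))⁻¹) *
      ((lam * y + ε * Real.exp (-lam * y ^ 2) / IgF lam ε y) *
        FF lam ε (x₀ * Real.exp (-lam * t)) (sigmaMinusSq lam t) y) := by
    funext y
    simp only [bOU, QOU, POU, hOU, FF, IgF]
    ring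
  have hFd : deriv (fun y => QOU lam ε x₀ t y) = fun z =>
      ((hOU lam ε x₀ 0)⁻¹ * (Real.sqrt lam / Real.sqrt Real.pi) * Real.exp (-lam * t) *
        (Real.sqrt (2 * Real.pi * sigmaMinusSq lam t))⁻¹) *
      FF' lam ε (x₀ * Real.exp (-lam * t)) (sigmaMinusSq lam t) z := by
    funext z
    rw [hfun_x]
    exact ((FF_hasDerivAt lam hlam ε hε _ _ hv0.ne' z).const_mul _).deriv
  have hBF : HasDerivAt (fun y => (lam * y + ε * Real.exp (-lam * y ^ 2) / IgF lam ε y) *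
      FF lam ε (x₀ * Real.exp (-lam * t)) (sigmaMinusSq lam t) y) _ x :=
    (b_hasDerivAt lam hlam ε hε x).mul
      (FF_hasDerivAt lam hlam ε hε (x₀ * Real.exp (-lam * t)) (sigmaMinusSq lam t) hv0.ne' x)
  rw [hfun_t, (hT.const_mul ((hOU lam ε x₀ 0)⁻¹ * (Real.sqrt lam / Real.sqrt Real.pi) *
      Real.exp (lam * x ^ 2) * IgF lam ε x)).deriv,
    hfun_b,
    (hBF.const_mul
      ((hOU lam ε x₀ 0)⁻¹ * (Real.sqrt lam / Real.sqrt Real.pi) * Real.exp (-lam * t) *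
        (Real.sqrt (2 * Real.pi * sigmaMinusSq lam t))⁻¹)).deriv,
    hFd,
    ((FF'_hasDerivAt lam hlam ε hε (x₀ * Real.exp (-lam * t)) (sigmaMinusSq lam t)
        hv0.ne' x).const_mul
      ((hOU lam ε x₀ 0)⁻¹ * (Real.sqrt lam / Real.sqrt Real.pi) * Real.exp (-lam * t) *
        (Real.sqrt (2 * Real.pi * sigmaMinusSq lam t))⁻¹)).deriv]
  have hen : Real.exp (-lam * x ^ 2) = (Real.exp (lam * x ^ 2))⁻¹ := by
    rw [← Real.exp_neg]; congr 1; ring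
  have hIx' : (∫ s in Set.Iic (ε * x), Real.exp (-lam * s ^ 2)) ≠ 0 := by
    have := hIx; simp only [IgF] at this; exact this.ne'
  have hH : 0 < hOU lam ε x₀ 0 := by
    have hi := IgF_pos lam hlam ε x₀
    simp only [IgF] at hi
    have h1 : (0:ℝ) < Real.sqrt lam / Real.sqrt Real.pi :=
      div_pos (Real.sqrt_pos.mpr hlam) (Real.sqrt_pos.mpr Real.pi_pos)
    simp only [hOU]
    exact mul_pos (mul_pos (mul_pos (Real.exp_pos _) (Real.exp_pos _)) h1) hi
  simp only [FF, FF', FF'', IgF, Pi.mul_apply, Pi.div_apply, Pi.neg_apply, Pi.pow_apply]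
  rw [hen]
  set Q : ℝ := Real.exp (-(x - x₀ * Real.exp (-lam * t)) ^ 2 / (2 * sigmaMinusSq lam t)) with hQdef
  set S : ℝ := (Real.sqrt (2 * Real.pi * sigmaMinusSq lam t))⁻¹ with hSdef
  set ET : ℝ := Real.exp (-lam * t) with hETdef
  set U : ℝ := Real.exp (lam * x ^ 2) with hUdef
  set IX : ℝ := ∫ s in Set.Iic (ε * x), Real.exp (-lam * s ^ 2) with hIXdef
  set H : ℝ := hOU lam ε x₀ 0 with hHdef
  set V : ℝ := sigmaMinusSq lam t with hVdef
  have hU0 : U ≠ 0 := Real.exp_ne_zero _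
  have hV0 : V ≠ 0 := hv0.ne'
  have hH0 : H ≠ 0 := hH.ne'
  rcases hε with rfl | rfl <;>
    · field_simp [hU0, hV0, hH0, hIx']
      ring
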